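/- Let γ : ℝ → ℝ³ be a unit speed spherical curve with geodesic curvature k_g and p(s) = γ(s) × γ'(s). Let b > 0 and θ ∈ (0, π) be constants with 1 − cot θ · k_g(s) > 0 on the interval considered, a ∈ ℝ³, and define c(s) = b ∫_{s₀}^{s} γ(φ) dφ + b cot θ ∫_{s₀}^{s} p(φ) dφ + a. Then the speed, curvature and torsion of c are ν(s) = b/ sin θ (= b csc θ), κ(s) = sin²θ (1 − cot θ · k_g(s))/b, and τ(s) = sin²θ (k_g(s) + cot θ)/b. -/

import Mathlib

open scoped ContDiff


noncomputable section

/-- ℝ³ as a Euclidean space. -/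
abbrev E3 : Type := EuclideanSpace ℝ (Fin 3)

/-- The cross product on ℝ³. -/
def cross3 (u v : E3) : E3 :=
  (WithLp.equiv 2 (Fin 3 → ℝ)).symm
    (crossProduct ((WithLp.equiv 2 (Fin 3 → ℝ)) u) ((WithLp.equiv 2 (Fin 3 → ℝ)) v))

/-- The (real) inner product on ℝ³. -/
def inner3 (u v : E3) : ℝ := inner ℝ u v

/-- The speed ν of a curve. -/
def speed (c : ℝ → E3) (s : ℝ) : ℝ := ‖deriv c s‖

/-- The curvature κ of a curve. -/
def curvature (c : ℝ → E3) (s : ℝ) : ℝ :=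
  ‖cross3 (deriv c s) (deriv (deriv c) s)‖ / ‖deriv c s‖ ^ 3

/-- The torsion τ of a curve. -/
def torsion (c : ℝ → E3) (s : ℝ) : ℝ :=
  inner3 (cross3 (deriv c s) (deriv (deriv c) s)) (deriv (deriv (deriv c)) s) /
    ‖cross3 (deriv c s) (deriv (deriv c) s)‖ ^ 2

/-- σ(s) = (κ²/(ν (κ² + τ²)^{3/2}))·(τ/κ)'(s), the geodesic curvature of the spherical
image of the principal normal indicatrix. -/
def sigmaOf (c : ℝ → E3) (s : ℝ) : ℝ :=
  (curvature c s) ^ 2 / (speed c s * ((curvature c s) ^ 2 + (torsion c s) ^ 2) ^ ((3 : ℝ) / 2)) *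
    deriv (fun t => torsion c t / curvature c t) s

/-- The geodesic curvature k_g(s) = det(γ(s), γ'(s), γ''(s)) = ⟨γ(s) × γ'(s), γ''(s)⟩ of a
unit speed spherical curve γ. -/
def kgOf (γ : ℝ → E3) (s : ℝ) : ℝ :=
  inner3 (cross3 (γ s) (deriv γ s)) (deriv (deriv γ) s)

/-- Build a vector in ℝ³ from coordinates. -/
def mk3 (x y z : ℝ) : E3 := (WithLp.equiv 2 (Fin 3 → ℝ)).symm ![x, y, z]

end

noncomputable section

lemma cross3_apply (u v : E3) (i : Fin 3) :
    cross3 u v i = ![u 1 * v 2 - u 2 * v 1, u 2 * v 0 - u 0 * v 2, u 0 * v 1 - u 1 * v 0] i := by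
  rfl

lemma inner3_eq (u v : E3) : inner3 u v = u 0 * v 0 + u 1 * v 1 + u 2 * v 2 := by
  simp [inner3, PiLp.inner_apply, Fin.sum_univ_three, mul_comm]

lemma e3_ext {u v : E3} (h : ∀ i, u i = v i) : u = v := PiLp.ext h

@[simp] lemma cross3_add_left (u v w : E3) : cross3 (u + v) w = cross3 u w + cross3 v w := by
  apply e3_ext; intro i; fin_cases i <;>
    simp [cross3_apply, PiLp.add_apply] <;> ring

@[simp] lemma cross3_add_right (u v w : E3) : cross3 u (v + w) = cross3 u v + cross3 u w := by
  apply e3_ext; intro i; fin_cases i <;>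
    simp [cross3_apply, PiLp.add_apply] <;> ring

@[simp] lemma cross3_smul_left (a : ℝ) (u v : E3) : cross3 (a • u) v = a • cross3 u v := by
  apply e3_ext; intro i; fin_cases i <;>
    simp [cross3_apply, PiLp.smul_apply, smul_eq_mul] <;> ring

@[simp] lemma cross3_smul_right (a : ℝ) (u v : E3) : cross3 u (a • v) = a • cross3 u v := by
  apply e3_ext; intro i; fin_cases i <;>
    simp [cross3_apply, PiLp.smul_apply, smul_eq_mul] <;> ring

@[simp] lemma cross3_self (u : E3) : cross3 u u = 0 := by
  apply e3_ext; intro i; fin_cases i <;> simp [cross3_apply] <;> ring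

lemma cross3_triple (u v w : E3) :
    cross3 u (cross3 v w) = inner3 u w • v - inner3 u v • w := by
  apply e3_ext; intro i; fin_cases i <;>
    simp [cross3_apply, inner3_eq, PiLp.smul_apply, PiLp.sub_apply, smul_eq_mul] <;> ring

lemma inner3_lagrange (u v w x : E3) :
    inner3 (cross3 u v) (cross3 w x) = inner3 u w * inner3 v x - inner3 u x * inner3 v w := by
  simp only [inner3_eq, cross3_apply]
  simp [Matrix.cons_val_zero, Matrix.cons_val_one]; ring

@[simp] lemma inner3_cross_left (u v : E3) : inner3 (cross3 u v) u = 0 := by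
  simp only [inner3_eq, cross3_apply]; simp; ring

@[simp] lemma inner3_cross_right (u v : E3) : inner3 (cross3 u v) v = 0 := by
  simp only [inner3_eq, cross3_apply]; simp; ring

lemma inner3_cross_cyclic (u v w : E3) : inner3 (cross3 u v) w = inner3 (cross3 v w) u := by
  simp only [inner3_eq, cross3_apply]; simp; ring

lemma inner3_comm (u v : E3) : inner3 u v = inner3 v u := by simp [inner3_eq]; ring

@[simp] lemma inner3_add_left (u v w : E3) : inner3 (u + v) w = inner3 u w + inner3 v w := by
  simp [inner3_eq, PiLp.add_apply]; ring
@[simp] lemma inner3_add_right (u v w : E3) : inner3 u (v + w) = inner3 u v + inner3 u w := by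
  simp [inner3_eq, PiLp.add_apply]; ring
@[simp] lemma inner3_sub_left (u v w : E3) : inner3 (u - v) w = inner3 u w - inner3 v w := by
  simp [inner3_eq, PiLp.sub_apply]; ring
@[simp] lemma inner3_sub_right (u v w : E3) : inner3 u (v - w) = inner3 u v - inner3 u w := by
  simp [inner3_eq, PiLp.sub_apply]; ring
@[simp] lemma inner3_smul_left (a : ℝ) (u v : E3) : inner3 (a • u) v = a * inner3 u v := by
  simp [inner3_eq, PiLp.smul_apply, smul_eq_mul]; ring
@[simp] lemma inner3_smul_right (a : ℝ) (u v : E3) : inner3 u (a • v) = a * inner3 u v := by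
  simp [inner3_eq, PiLp.smul_apply, smul_eq_mul]; ring
@[simp] lemma inner3_neg_left (u v : E3) : inner3 (-u) v = -inner3 u v := by
  simp [inner3_eq]; ring
@[simp] lemma inner3_neg_right (u v : E3) : inner3 u (-v) = -inner3 u v := by
  simp [inner3_eq]; ring
@[simp] lemma inner3_zero_left (v : E3) : inner3 0 v = 0 := by simp [inner3_eq]
@[simp] lemma inner3_zero_right (v : E3) : inner3 v 0 = 0 := by simp [inner3_eq]
@[simp] lemma cross3_zero_left (v : E3) : cross3 0 v = 0 := by
  apply e3_ext; intro i; fin_cases i <;> simp [cross3_apply]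
@[simp] lemma cross3_zero_right (v : E3) : cross3 v 0 = 0 := by
  apply e3_ext; intro i; fin_cases i <;> simp [cross3_apply]
@[simp] lemma cross3_neg_left (u v : E3) : cross3 (-u) v = -cross3 u v := by
  apply e3_ext; intro i; fin_cases i <;> simp [cross3_apply] <;> ring
@[simp] lemma cross3_neg_right (u v : E3) : cross3 u (-v) = -cross3 u v := by
  apply e3_ext; intro i; fin_cases i <;> simp [cross3_apply] <;> ring

lemma norm_sq_eq_inner3 (u : E3) : ‖u‖ ^ 2 = inner3 u u :=
  (real_inner_self_eq_norm_sq u).symm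

/-- Decomposition: a vector with prescribed inner products against an orthonormal
pair u, v lies in the plane spanned by u and u × v as prescribed. -/
lemma decomp (u v w : E3) (huu : inner3 u u = 1) (hvv : inner3 v v = 1)
    (huv : inner3 u v = 0) (huw : inner3 u w = -1) (hvw : inner3 v w = 0) :
    w = -u + inner3 (cross3 u v) w • cross3 u v := by
  set p := cross3 u v with hp
  set k := inner3 p w with hk
  have hpp : inner3 p p = 1 := by
    rw [hp, inner3_lagrange, huu, hvv, huv, inner3_comm v u, huv]; ring
  have hpu : inner3 p u = 0 := inner3_cross_left u v
  have hpv : inner3 p v = 0 := inner3_cross_right u v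
  set z := w + u - k • p with hz
  have hzu : inner3 z u = 0 := by
    rw [hz, inner3_sub_left, inner3_add_left, inner3_smul_left, inner3_comm w u, huw, huu, hpu]; ring
  have hzv : inner3 z v = 0 := by
    rw [hz, inner3_sub_left, inner3_add_left, inner3_smul_left, inner3_comm w v, hvw, huv, hpv]; ring
  have hzp : inner3 p z = 0 := by
    rw [hz, inner3_sub_right, inner3_add_right, inner3_smul_right, hpp, hpu, ← hk]; ring
  have hcross : cross3 z p = 0 := by
    rw [hp, cross3_triple, hzv, hzu]; simp
  have hz0 : z = 0 := by
    have h1 : cross3 p (cross3 z p) = inner3 p p • z - inner3 p z • p := cross3_triple p z p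
    rw [hcross, hpp, hzp, cross3_zero_right] at h1
    simpa using h1.symm
  have : w + u - k • p = 0 := hz0
  have := sub_eq_zero.mp this  -- w + u = k • p
  linear_combination (norm := module) this

/-- Cross product as a linear map in the first argument. -/
def crossLin (u : E3) : E3 →ₗ[ℝ] E3 :=
  (WithLp.linearEquiv 2 ℝ (Fin 3 → ℝ)).symm.toLinearMap ∘ₗ
    (crossProduct ((WithLp.linearEquiv 2 ℝ (Fin 3 → ℝ)) u)) ∘ₗ
    (WithLp.linearEquiv 2 ℝ (Fin 3 → ℝ)).toLinearMap

lemma crossLin_apply (u v : E3) : crossLin u v = cross3 u v := rfl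

/-- Cross product as a continuous bilinear map. -/
def crossCLM : E3 →L[ℝ] E3 →L[ℝ] E3 :=
  LinearMap.toContinuousLinearMap
    { toFun := fun u => LinearMap.toContinuousLinearMap (crossLin u)
      map_add' := by
        intro u v
        refine ContinuousLinearMap.ext fun x => ?_
        simp only [ContinuousLinearMap.add_apply, LinearMap.coe_toContinuousLinearMap',
          crossLin_apply]
        exact cross3_add_left u v x
      map_smul' := by
        intro a u
        refine ContinuousLinearMap.ext fun x => ?_
        simp only [ContinuousLinearMap.coe_smul', Pi.smul_apply, RingHom.id_apply,
          LinearMap.coe_toContinuousLinearMap', crossLin_apply]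
        exact cross3_smul_left a u x }

lemma crossCLM_apply (u v : E3) : crossCLM u v = cross3 u v := rfl

lemma HasDerivAt.cross3' {f g : ℝ → E3} {f' g' : E3} {s : ℝ}
    (hf : HasDerivAt f f' s) (hg : HasDerivAt g g' s) :
    HasDerivAt (fun t => cross3 (f t) (g t)) (cross3 f' (g s) + cross3 (f s) g') s := by
  have h1 : HasDerivAt (fun t => crossCLM (f t)) (crossCLM f') s :=
    (crossCLM.hasFDerivAt).comp_hasDerivAt s hf
  exact h1.clm_apply hg

lemma continuous_cross3 {f g : ℝ → E3} (hf : Continuous f) (hg : Continuous g) :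
    Continuous (fun t => cross3 (f t) (g t)) := by
  have : Continuous fun p : E3 × E3 => crossCLM p.1 p.2 :=
    crossCLM.isBoundedBilinearMap.continuous
  exact this.comp (hf.prodMk hg)

lemma hasDerivAt_intervalIntegral {f : ℝ → E3} (hf : Continuous f) (s₀ s : ℝ) :
    HasDerivAt (fun t => ∫ φ in s₀..t, f φ) (f s) s :=
  intervalIntegral.integral_hasDerivAt_right (hf.intervalIntegrable _ _)
    (hf.stronglyMeasurableAtFilter _ _) hf.continuousAt

lemma eq_of_sq_eq_sq' {a b : ℝ} (ha : 0 ≤ a) (hb : 0 ≤ b) (h : a ^ 2 = b ^ 2) : a = b := by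
  nlinarith [sq_nonneg (a - b), sq_nonneg (a + b)]

lemma cross3_anticomm (u v : E3) : cross3 u v = -cross3 v u := by
  apply e3_ext; intro i; fin_cases i <;> simp [cross3_apply] <;> ring

end

/-- For the Bertrand-type curve c(s) = b ∫ γ dφ + b cot θ ∫ p dφ + a with
b > 0, θ ∈ (0, π) and 1 − cot θ k_g > 0 on I: ν = b/sin θ,
κ = sin²θ (1 − cot θ k_g)/b, τ = sin²θ (k_g + cot θ)/b on I. -/
theorem frenet_data_of_bertrand_curve
    (γ : ℝ → E3) (hγ : ContDiff ℝ (⊤ : ℕ∞) γ)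
    (hsph : ∀ s, ‖γ s‖ = 1) (hunit : ∀ s, ‖deriv γ s‖ = 1)
    (b θ : ℝ) (hb : 0 < b) (hθ : θ ∈ Set.Ioo 0 Real.pi)
    (I : Set ℝ) (hIne : I.Nonempty) (hIopen : IsOpen I) (hIconn : I.OrdConnected)
    (hreg : ∀ s ∈ I, 0 < 1 - Real.cot θ * kgOf γ s)
    (a : E3) (s₀ : ℝ) (c : ℝ → E3)
    (hc : ∀ s, c s = b • (∫ φ in s₀..s, γ φ) +
      (b * Real.cot θ) • (∫ φ in s₀..s, cross3 (γ φ) (deriv γ φ)) + a) :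
    ∀ s ∈ I, speed c s = b / Real.sin θ ∧
      curvature c s = Real.sin θ ^ 2 * (1 - Real.cot θ * kgOf γ s) / b ∧
      torsion c s = Real.sin θ ^ 2 * (kgOf γ s + Real.cot θ) / b := by
  obtain ⟨hθ0, hθπ⟩ := hθ
  have hsin : 0 < Real.sin θ := Real.sin_pos_of_pos_of_lt_pi hθ0 hθπ
  -- smoothness
  have hγ0 : ContDiff ℝ (∞ : WithTop ℕ∞) γ := hγ.of_le (by simp)
  have hone : (1 : WithTop ℕ∞) ≤ ∞ := by exact_mod_cast le_top
  have hdγ : Differentiable ℝ γ := hγ0.differentiable (by simp)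
  have hγ1 : ContDiff ℝ (∞ : WithTop ℕ∞) (deriv γ) := (contDiff_infty_iff_deriv.mp hγ0).2
  have hdγ1 : Differentiable ℝ (deriv γ) := hγ1.differentiable (by simp)
  have hγ2 : ContDiff ℝ (∞ : WithTop ℕ∞) (deriv (deriv γ)) := (contDiff_infty_iff_deriv.mp hγ1).2
  have hdγ2 : Differentiable ℝ (deriv (deriv γ)) := hγ2.differentiable (by simp)
  have hD1 : ∀ s, HasDerivAt γ (deriv γ s) s := fun s => (hdγ s).hasDerivAt
  have hD2 : ∀ s, HasDerivAt (deriv γ) (deriv (deriv γ) s) s := fun s => (hdγ1 s).hasDerivAt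
  have hD3 : ∀ s, HasDerivAt (deriv (deriv γ)) (deriv (deriv (deriv γ)) s) s :=
    fun s => (hdγ2 s).hasDerivAt
  -- pointwise constraints
  have h1 : ∀ s, inner3 (γ s) (γ s) = 1 := fun s => by
    rw [← norm_sq_eq_inner3, hsph s, one_pow]
  have h2 : ∀ s, inner3 (deriv γ s) (deriv γ s) = 1 := fun s => by
    rw [← norm_sq_eq_inner3, hunit s, one_pow]
  have h3 : ∀ s, inner3 (γ s) (deriv γ s) = 0 := by
    intro s
    have hA : HasDerivAt (fun t => inner3 (γ t) (γ t))
        (inner3 (γ s) (deriv γ s) + inner3 (deriv γ s) (γ s)) s := (hD1 s).inner ℝ (hD1 s)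
    have hB : HasDerivAt (fun t => inner3 (γ t) (γ t)) 0 s := by
      have hco : (fun t => inner3 (γ t) (γ t)) = fun _ => (1 : ℝ) := funext h1
      rw [hco]; exact hasDerivAt_const s 1
    have := hA.unique hB
    have hcm := inner3_comm (deriv γ s) (γ s)
    linarith
  have h5 : ∀ s, inner3 (deriv γ s) (deriv (deriv γ) s) = 0 := by
    intro s
    have hA : HasDerivAt (fun t => inner3 (deriv γ t) (deriv γ t))
        (inner3 (deriv γ s) (deriv (deriv γ) s) + inner3 (deriv (deriv γ) s) (deriv γ s)) s :=
      (hD2 s).inner ℝ (hD2 s)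
    have hB : HasDerivAt (fun t => inner3 (deriv γ t) (deriv γ t)) 0 s := by
      have hco : (fun t => inner3 (deriv γ t) (deriv γ t)) = fun _ => (1 : ℝ) := funext h2
      rw [hco]; exact hasDerivAt_const s 1
    have := hA.unique hB
    have hcm := inner3_comm (deriv (deriv γ) s) (deriv γ s)
    linarith
  have h4 : ∀ s, inner3 (γ s) (deriv (deriv γ) s) = -1 := by
    intro s
    have hA : HasDerivAt (fun t => inner3 (γ t) (deriv γ t))
        (inner3 (γ s) (deriv (deriv γ) s) + inner3 (deriv γ s) (deriv γ s)) s :=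
      (hD1 s).inner ℝ (hD2 s)
    have hB : HasDerivAt (fun t => inner3 (γ t) (deriv γ t)) 0 s := by
      have hco : (fun t => inner3 (γ t) (deriv γ t)) = fun _ => (0 : ℝ) := funext h3
      rw [hco]; exact hasDerivAt_const s 0
    have := hA.unique hB
    have h2s := h2 s
    linarith
  have h6 : ∀ s, inner3 (deriv γ s) (deriv (deriv (deriv γ)) s) =
      -inner3 (deriv (deriv γ) s) (deriv (deriv γ) s) := by
    intro s
    have hA : HasDerivAt (fun t => inner3 (deriv γ t) (deriv (deriv γ) t))
        (inner3 (deriv γ s) (deriv (deriv (deriv γ)) s) +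
          inner3 (deriv (deriv γ) s) (deriv (deriv γ) s)) s :=
      (hD2 s).inner ℝ (hD3 s)
    have hB : HasDerivAt (fun t => inner3 (deriv γ t) (deriv (deriv γ) t)) 0 s := by
      have hco : (fun t => inner3 (deriv γ t) (deriv (deriv γ) t)) = fun _ => (0 : ℝ) :=
        funext h5
      rw [hco]; exact hasDerivAt_const s 0
    have := hA.unique hB
    linarith
  -- derivatives of c
  have hγcont : Continuous γ := hγ0.continuous
  have hγ'cont : Continuous (deriv γ) := hγ1.continuous
  have hpcont : Continuous (fun φ => cross3 (γ φ) (deriv γ φ)) :=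
    continuous_cross3 hγcont hγ'cont
  have hcfun : c = fun s => b • (∫ φ in s₀..s, γ φ) +
      (b * Real.cot θ) • (∫ φ in s₀..s, cross3 (γ φ) (deriv γ φ)) + a := funext hc
  have hC1 : ∀ s, HasDerivAt c
      (b • γ s + (b * Real.cot θ) • cross3 (γ s) (deriv γ s)) s := by
    intro s
    rw [hcfun]
    exact (((hasDerivAt_intervalIntegral hγcont s₀ s).const_smul b).add
      ((hasDerivAt_intervalIntegral hpcont s₀ s).const_smul (b * Real.cot θ))).add_const a
  have hdc : deriv c = fun s => b • γ s + (b * Real.cot θ) • cross3 (γ s) (deriv γ s) :=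
    funext fun s => (hC1 s).deriv
  have hC2 : ∀ s, HasDerivAt (deriv c)
      (b • deriv γ s + (b * Real.cot θ) • cross3 (γ s) (deriv (deriv γ) s)) s := by
    intro s
    rw [hdc]
    have := ((hD1 s).const_smul b).add
      (((hD1 s).cross3' (hD2 s)).const_smul (b * Real.cot θ))
    rw [cross3_self, zero_add] at this
    exact this
  have hddc : deriv (deriv c) =
      fun s => b • deriv γ s + (b * Real.cot θ) • cross3 (γ s) (deriv (deriv γ) s) :=
    funext fun s => (hC2 s).deriv
  have hC3 : ∀ s, HasDerivAt (deriv (deriv c))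
      (b • deriv (deriv γ) s + (b * Real.cot θ) •
        (cross3 (deriv γ s) (deriv (deriv γ) s) + cross3 (γ s) (deriv (deriv (deriv γ)) s))) s := by
    intro s
    rw [hddc]
    exact ((hD2 s).const_smul b).add
      (((hD1 s).cross3' (hD3 s)).const_smul (b * Real.cot θ))
  -- main computation
  intro s hs
  have hAreg : 0 < 1 - Real.cot θ * kgOf γ s := hreg s hs
  have hk : kgOf γ s = inner3 (cross3 (γ s) (deriv γ s)) (deriv (deriv γ) s) := rfl
  have hw : deriv (deriv γ) s = -γ s + kgOf γ s • cross3 (γ s) (deriv γ s) := by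
    rw [hk]
    exact decomp (γ s) (deriv γ s) (deriv (deriv γ) s) (h1 s) (h2 s) (h3 s) (h4 s) (h5 s)
  have hpp : inner3 (cross3 (γ s) (deriv γ s)) (cross3 (γ s) (deriv γ s)) = 1 := by
    rw [inner3_lagrange, h1 s, h2 s, h3 s, inner3_comm (deriv γ s) (γ s), h3 s]; ring
  have hpu : inner3 (cross3 (γ s) (deriv γ s)) (γ s) = 0 := inner3_cross_left _ _
  have hup : inner3 (γ s) (cross3 (γ s) (deriv γ s)) = 0 :=
    (inner3_comm _ _).trans hpu
  have hpv : inner3 (cross3 (γ s) (deriv γ s)) (deriv γ s) = 0 := inner3_cross_right _ _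
  have hvp : inner3 (deriv γ s) (cross3 (γ s) (deriv γ s)) = 0 :=
    (inner3_comm _ _).trans hpv
  -- cross3 u p = -v and cross3 p v = -u
  have hcup : cross3 (γ s) (cross3 (γ s) (deriv γ s)) = -deriv γ s := by
    rw [cross3_triple, h3 s, h1 s]; module
  have hcpv : cross3 (cross3 (γ s) (deriv γ s)) (deriv γ s) = -γ s := by
    rw [cross3_anticomm, cross3_triple, h2 s, inner3_comm (deriv γ s) (γ s), h3 s]; module
  -- second derivative simplification
  have hcuw : cross3 (γ s) (deriv (deriv γ) s) = (-(kgOf γ s)) • deriv γ s := by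
    rw [hw, cross3_add_right, cross3_neg_right, cross3_self, cross3_smul_right, hcup]
    module
  have e2 : deriv (deriv c) s = (b * (1 - Real.cot θ * kgOf γ s)) • deriv γ s := by
    rw [hddc]
    show b • deriv γ s + (b * Real.cot θ) • cross3 (γ s) (deriv (deriv γ) s)
      = (b * (1 - Real.cot θ * kgOf γ s)) • deriv γ s
    rw [hcuw]; module
  have e1 : deriv c s = b • γ s + (b * Real.cot θ) • cross3 (γ s) (deriv γ s) := by rw [hdc]
  -- the cross product of the first two derivatives
  have eX : cross3 (deriv c s) (deriv (deriv c) s) =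
      (b ^ 2 * (1 - Real.cot θ * kgOf γ s)) • cross3 (γ s) (deriv γ s) +
        (-(b ^ 2 * (1 - Real.cot θ * kgOf γ s) * Real.cot θ)) • γ s := by
    rw [e1, e2, cross3_smul_right, cross3_add_left, cross3_smul_left, cross3_smul_left, hcpv]
    module
  -- squared norms
  have hn1sq : ‖deriv c s‖ ^ 2 = b ^ 2 * (1 + Real.cot θ ^ 2) := by
    rw [norm_sq_eq_inner3, e1]
    simp only [inner3_add_left, inner3_add_right, inner3_smul_left, inner3_smul_right,
      h1 s, hpp, hpu, hup]
    ring
  have hsin2 : 1 + Real.cot θ ^ 2 = 1 / Real.sin θ ^ 2 := by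
    rw [Real.cot_eq_cos_div_sin]
    field_simp
    exact Real.sin_sq_add_cos_sq θ
  have hspeed : ‖deriv c s‖ = b / Real.sin θ := by
    apply eq_of_sq_eq_sq' (norm_nonneg _) (by positivity)
    rw [hn1sq, hsin2]
    field_simp
  have hnXsq : ‖cross3 (deriv c s) (deriv (deriv c) s)‖ ^ 2 =
      (b ^ 2 * (1 - Real.cot θ * kgOf γ s)) ^ 2 * (1 + Real.cot θ ^ 2) := by
    rw [norm_sq_eq_inner3, eX]
    simp only [inner3_add_left, inner3_add_right, inner3_smul_left, inner3_smul_right,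
      inner3_neg_left, inner3_neg_right, h1 s, hpp, hpu, hup]
    ring
  have hnX : ‖cross3 (deriv c s) (deriv (deriv c) s)‖ =
      b ^ 2 * (1 - Real.cot θ * kgOf γ s) / Real.sin θ := by
    apply eq_of_sq_eq_sq' (norm_nonneg _) (by positivity)
    rw [hnXsq, hsin2]
    field_simp
  -- torsion numerator
  have hww : inner3 (deriv (deriv γ) s) (deriv (deriv γ) s) = 1 + kgOf γ s ^ 2 := by
    rw [hw]
    simp only [inner3_add_left, inner3_add_right, inner3_smul_left, inner3_smul_right,
      inner3_neg_left, inner3_neg_right, h1 s, hpp, hpu, hup]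
    ring
  have t1 : inner3 (cross3 (γ s) (deriv γ s)) (cross3 (deriv γ s) (deriv (deriv γ) s)) = 1 := by
    rw [inner3_lagrange, h3 s, h5 s, h4 s, h2 s]; ring
  have t2 : inner3 (cross3 (γ s) (deriv γ s)) (cross3 (γ s) (deriv (deriv (deriv γ)) s)) =
      -(1 + kgOf γ s ^ 2) := by
    rw [inner3_lagrange, h1 s, h6 s, hww, inner3_comm (deriv γ s) (γ s), h3 s]; ring
  have t3 : inner3 (γ s) (cross3 (deriv γ s) (deriv (deriv γ) s)) = kgOf γ s := by
    rw [inner3_comm, ← inner3_cross_cyclic, ← hk]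
  have t4 : inner3 (γ s) (cross3 (γ s) (deriv (deriv (deriv γ)) s)) = 0 := by
    rw [inner3_comm]; exact inner3_cross_left _ _
  have eT : inner3 (cross3 (deriv c s) (deriv (deriv c) s)) (deriv (deriv (deriv c)) s) =
      b ^ 3 * (1 - Real.cot θ * kgOf γ s) ^ 2 * (kgOf γ s + Real.cot θ) := by
    have e3 : deriv (deriv (deriv c)) s = b • deriv (deriv γ) s + (b * Real.cot θ) •
        (cross3 (deriv γ s) (deriv (deriv γ) s) + cross3 (γ s) (deriv (deriv (deriv γ)) s)) :=
      (hC3 s).deriv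
    rw [eX, e3]
    simp only [inner3_add_left, inner3_add_right, inner3_smul_left, inner3_smul_right,
      inner3_neg_left, inner3_neg_right, ← hk, t1, t2, t3, t4, h4 s]
    ring
  -- conclusion
  have hsne : Real.sin θ ≠ 0 := ne_of_gt hsin
  have hbne : b ≠ 0 := ne_of_gt hb
  have hAne : 1 - Real.cot θ * kgOf γ s ≠ 0 := ne_of_gt hAreg
  refine ⟨hspeed, ?_, ?_⟩
  · rw [curvature, hnX, hspeed]
    field_simp
  · rw [torsion, eT, hnXsq, hsin2]
    field_simp
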